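/- Let G be a graph with vertex cover X, and let P = (p, v_1, ..., v_{n-3}, q) be an induced path such that the cycle C = (v, p, v_1, ..., v_{n-3}, q) is an odd hole for some vertex v ∉ X adjacent to p and q. Let D ⊆ V(G) \ X be disjoint from V(C), with every vertex of D adjacent to both p and q and to no other constraint, such that for every edge {a,b} of P the number of vertices of D adjacent to both a and b (i.e., seeing that edge) is even, and |D| is odd. Then some vertex u ∈ D sees an even number of edges of P, and hence G[V(P) ∪ {u}] contains an odd hole. -/

import Mathlib

open Finset
open scoped Classical

/-- `X` is a vertex cover of `G`: every edge has an endpoint in `X`. -/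
def IsVertexCover {V : Type*} (G : SimpleGraph V) (X : Finset V) : Prop :=
  ∀ ⦃a b : V⦄, G.Adj a b → a ∈ X ∨ b ∈ X

/-- `w : Fin m → V` is an induced path in `G`. -/
def IsInducedPathOn {V : Type*} (G : SimpleGraph V) {m : ℕ} (w : Fin m → V) : Prop :=
  Function.Injective w ∧
    ∀ i j : Fin m, G.Adj (w i) (w j) ↔ (i.val + 1 = j.val ∨ j.val + 1 = i.val)

/-- `f : Fin m → V` is an induced cycle in `G`. -/
def IsInducedCycleOn {V : Type*} (G : SimpleGraph V) {m : ℕ} (f : Fin m → V) : Prop :=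
  Function.Injective f ∧
    ∀ i j : Fin m, G.Adj (f i) (f j) ↔
      ((i.val + 1) % m = j.val ∨ (j.val + 1) % m = i.val)

/-- The induced subgraph of `G` on `S` contains an odd hole. -/
def HasOddHoleOn {V : Type*} (G : SimpleGraph V) (S : Set V) : Prop :=
  ∃ m : ℕ, 5 ≤ m ∧ Odd m ∧ ∃ f : Fin m → V, (∀ i, f i ∈ S) ∧ IsInducedCycleOn G f


/-! Counting the pairs (u, e) with u ∈ D seeing the edge e of P edge by edge gives an even total,
so, |D| being odd, some u ∈ D sees an even number of edges. The neighbours of such a u cut P,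
whose length n is odd, into gaps summing to n, and u sees an edge exactly at each gap of length 1.
If every gap had length 1 or even length, n would be congruent to the number of seen edges, which
is even. Hence some gap between consecutive neighbours is odd and at least 3, and u closes that
stretch of P into an odd hole. -/

namespace Nat

variable {A : ℕ → Prop} [DecidablePred A] {n : ℕ}

lemma even_findGreatest_add_card_consecutive (h0 : A 0)
    (hgap : ∀ i j, i < j → j ≤ n → A i → A j → (∀ t, i < t → t < j → ¬ A t) →
      j - i = 1 ∨ Even (j - i)) :
    Even (Nat.findGreatest A n + #{k ∈ range n | A k ∧ A (k + 1)}) := by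
  induction n with
  | zero => simp
  | succ n ih =>
    have ih := ih fun i j hij hjn => hgap i j hij (by omega)
    rw [range_add_one, filter_insert, findGreatest_succ]
    set s := findGreatest A n
    have hs : A s := findGreatest_spec (zero_le n) h0
    have hsn : s ≤ n := findGreatest_le n
    by_cases hA : A (n + 1)
    swap
    · rwa [if_neg hA, if_neg fun h => hA h.2]
    rw [if_pos hA]
    have hbetween : ∀ t, s < t → t < n + 1 → ¬ A t := fun t hst htn =>
      findGreatest_is_greatest hst (by omega)
    rcases hgap s (n + 1) (by omega) le_rfl hs hA hbetween with hgap1 | hgapeven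
    · have hs_eq : s = n := by omega
      rw [if_pos ⟨hs_eq ▸ hs, hA⟩, card_insert_of_notMem (by simp)]
      rw [Nat.even_iff] at ih ⊢
      omega
    · rw [Nat.even_iff] at hgapeven
      rw [if_neg fun h => hbetween n (by omega) (by omega) h.1]
      rw [Nat.even_iff] at ih ⊢
      omega

lemma exists_odd_gap_of_even_card_consecutive (h0 : A 0) (hn : A n) (hodd : Odd n)
    (heven : Even #{k ∈ range n | A k ∧ A (k + 1)}) :
    ∃ i j, i < j ∧ j ≤ n ∧ A i ∧ A j ∧ (∀ t, i < t → t < j → ¬ A t) ∧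
      Odd (j - i) ∧ 3 ≤ j - i := by
  by_contra! hno
  have key := even_findGreatest_add_card_consecutive (n := n) h0 fun i j hij hjn hi hj hbet => by
    rcases Nat.even_or_odd (j - i) with he | ho
    · exact Or.inr he
    · have := hno i j hij hjn hi hj hbet ho
      rw [Nat.odd_iff] at ho
      omega
  rw [findGreatest_eq hn] at key
  exact Nat.not_even_iff_odd.2 (hodd.add_even heven) key

lemma add_one_mod_eq_ite {a N : ℕ} (ha : a < N) :
    (a + 1) % N = if a + 1 = N then 0 else a + 1 := by
  split_ifs with h
  · rw [h, mod_self]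
  · exact mod_eq_of_lt (by omega)

end Nat

lemma Finset.exists_even_card_filter_of_odd_card {α β : Type*} {s : Finset α} {t : Finset β}
    (r : α → β → Prop) [∀ a b, Decidable (r a b)] (hs : Odd #s)
    (ht : ∀ b ∈ t, Even #{a ∈ s | r a b}) :
    ∃ a ∈ s, Even #{b ∈ t | r a b} := by
  by_contra! hodd
  have hsum := sum_card_bipartiteAbove_eq_sum_card_bipartiteBelow (s := s) (t := t) (r := r)
  have hall : {a ∈ s | Odd #(t.bipartiteAbove r a)} = s :=
    filter_true_of_mem fun a ha => Nat.not_even_iff_odd.1 (hodd a ha)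
  have hsum_odd : Odd (∑ a ∈ s, #(t.bipartiteAbove r a)) := by
    rwa [odd_sum_iff_odd_card_odd, hall]
  exact Nat.not_even_iff_odd.2 hsum_odd (hsum ▸ even_sum _ ht)

section InducedPaths

variable {V : Type*} {G : SimpleGraph V}

lemma IsInducedPathOn.isInducedCycleOn_cons {n : ℕ} {p : Fin (n + 1) → V}
    (hp : IsInducedPathOn G p) {u : V} (hu : u ∉ Set.range p)
    (hadj : ∀ k, G.Adj u (p k) ↔ (k.val = 0 ∨ k.val = n)) :
    IsInducedCycleOn G (Fin.cons u p : Fin (n + 2) → V) := by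
  refine ⟨Fin.cons_injective_iff.2 ⟨hu, hp.1⟩, fun a b => ?_⟩
  rw [Nat.add_one_mod_eq_ite a.isLt, Nat.add_one_mod_eq_ite b.isLt]
  cases a using Fin.cases <;> cases b using Fin.cases <;>
    simp only [Fin.cons_zero, Fin.cons_succ, SimpleGraph.irrefl, hadj, G.adj_comm _ u, hp.2,
      Fin.val_zero, Fin.val_succ] <;> split_ifs <;> grind

lemma IsInducedPathOn.comp_add {m : ℕ} {w : Fin m → V} (hw : IsInducedPathOn G w)
    {i n : ℕ} (h : i + n < m) :
    IsInducedPathOn G fun k : Fin (n + 1) => w ⟨i + k, by omega⟩ := by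
  refine ⟨fun a b hab => ?_, fun a b => ?_⟩
  · have := congrArg Fin.val (hw.1 hab)
    exact Fin.ext (by simpa using this)
  · rw [hw.2]
    dsimp only
    omega

lemma IsInducedPathOn.hasOddHoleOn_of_odd_gap {m : ℕ} {w : Fin m → V}
    (hw : IsInducedPathOn G w) {u : V} (hu : u ∉ Set.range w) {i j : ℕ} (hij : i < j)
    (hjm : j < m) (hi : G.Adj u (w ⟨i, by omega⟩)) (hj : G.Adj u (w ⟨j, hjm⟩))
    (hbetween : ∀ t (ht : t < m), i < t → t < j → ¬ G.Adj u (w ⟨t, ht⟩))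
    (hodd : Odd (j - i)) (h3 : 3 ≤ j - i) :
    HasOddHoleOn G (Set.range w ∪ {u}) := by
  obtain ⟨g, rfl⟩ : ∃ g, j = i + g := ⟨j - i, by omega⟩
  rw [Nat.add_sub_cancel_left] at hodd h3
  refine ⟨g + 2, by omega, hodd.add_even even_two, _, fun k => ?_,
    (hw.comp_add hjm).isInducedCycleOn_cons (fun ⟨k, hk⟩ => hu ⟨_, hk⟩) fun k => ?_⟩
  · cases k using Fin.cases
    · exact Or.inr rfl
    · exact Or.inl ⟨_, rfl⟩
  · refine ⟨fun h => ?_, ?_⟩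
    · by_contra! hk
      exact hbetween _ _ (by omega) (by omega) h
    · rintro (hk | hk)
      · convert hi using 3
        omega
      · convert hj using 3
        omega

theorem IsInducedPathOn.hasOddHoleOn_of_even_card_seen {n : ℕ} {w : Fin (n + 1) → V}
    (hw : IsInducedPathOn G w) (hn : Odd n) {u : V} (hu : u ∉ Set.range w)
    (h0 : G.Adj u (w 0)) (hlast : G.Adj u (w (Fin.last n)))
    (heven : Even #{k : Fin n | G.Adj u (w k.castSucc) ∧ G.Adj u (w k.succ)}) :
    HasOddHoleOn G (Set.range w ∪ {u}) := by
  set A : ℕ → Prop := fun t => ∃ h : t < n + 1, G.Adj u (w ⟨t, h⟩)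
  have hcard : #{k : Fin n | G.Adj u (w k.castSucc) ∧ G.Adj u (w k.succ)} =
      #{k ∈ range n | A k ∧ A (k + 1)} := by
    rw [card_filter, card_filter, ← Fin.sum_univ_eq_sum_range]
    refine sum_congr rfl fun k _ => if_congr ?_ rfl rfl
    exact ⟨fun ⟨h1, h2⟩ => ⟨⟨_, h1⟩, ⟨_, h2⟩⟩, fun ⟨⟨_, h1⟩, ⟨_, h2⟩⟩ => ⟨h1, h2⟩⟩
  obtain ⟨i, j, hij, hjn, ⟨_, hi⟩, ⟨hjn', hj⟩, hbetween, hodd, h3⟩ :=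
    Nat.exists_odd_gap_of_even_card_consecutive (A := A) ⟨_, h0⟩ ⟨_, hlast⟩ hn (by rwa [← hcard])
  exact hw.hasOddHoleOn_of_odd_gap hu hij hjn' hi hj
    (fun t ht hit htj h => hbetween t hit htj ⟨ht, h⟩) hodd h3

end InducedPaths

theorem stmt15 {V : Type*} (G : SimpleGraph V)
    {m : ℕ} (hm : 4 ≤ m) (hmeven : Even m)
    (w : Fin m → V) (hpath : IsInducedPathOn G w)
    (D : Finset V) (hDP : ∀ d ∈ D, d ∉ Set.range w)
    (hDends : ∀ d ∈ D, G.Adj d (w ⟨0, by omega⟩) ∧ G.Adj d (w ⟨m - 1, by omega⟩))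
    (hedges : ∀ i : Fin (m - 1), Even ((D.filter (fun d =>
      G.Adj d (w ⟨i.val, by omega⟩) ∧ G.Adj d (w ⟨i.val + 1, by omega⟩))).card))
    (hDodd : Odd D.card) :
    ∃ u ∈ D, Even ((Finset.univ.filter (fun i : Fin (m - 1) =>
        G.Adj u (w ⟨i.val, by omega⟩) ∧ G.Adj u (w ⟨i.val + 1, by omega⟩))).card) ∧
      HasOddHoleOn G (Set.range w ∪ {u}) := by
  obtain ⟨u, huD, hu⟩ := exists_even_card_filter_of_odd_card (t := univ)
    (fun d (i : Fin (m - 1)) => G.Adj d (w ⟨i, by omega⟩) ∧ G.Adj d (w ⟨i + 1, by omega⟩))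
    hDodd fun i _ => hedges i
  refine ⟨u, huD, hu, ?_⟩
  obtain ⟨n, rfl⟩ : ∃ n, m = n + 1 := ⟨m - 1, by omega⟩
  have hn : Odd n := by simpa [Nat.even_add_one] using hmeven
  exact hpath.hasOddHoleOn_of_even_card_seen hn (hDP u huD) (hDends u huD).1 (hDends u huD).2 hu
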